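/- arXiv:2206.01484 — 2 statements merged into one kernel-verified Lean document; each statement's English description precedes it below -/
import Mathlib

section
/- For all real numbers 0 < x < y and all ν > 0, the ratio of modified Bessel functions of the first kind satisfies e^{x−y}·(x/y)^ν ≤ I_ν(x)/I_ν(y) ≤ e^{y−x}·(x/y)^ν. -/
/-!
Write `I_ν(x) = (x/2)^ν S(x)` with `S(t) = Σ ψ_m t^{2m}/(2m)!`, where
`ψ_m = (2m)! / (4^m m! Γ(m+ν+1))` is positive and, for `ν ≥ -1/2`, decreasing. The factor `(x/y)^ν`
comes out of the ratio, and it remains to show `e^{x-y} ≤ S(x)/S(y) ≤ 1 ≤ e^{y-x}`. The upper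
bound is the monotonicity of `S`. For the lower bound, `e^{-t} S(t)` decreases on `t ≥ 0`: by Abel
summation against the decreasing `ψ` it suffices that every `e^{-t} Σ_{m<n} t^{2m}/(2m)!` decreases,
and the derivative of the latter is `-e^{-t}` times an even-degree Taylor polynomial of `e^{-t}`,
which dominates `e^{-t} > 0`.
-/

/-- The modified Bessel function of the first kind,
`I_ν(x) = Σ_{m≥0} (x/2)^(2m+ν) / (m! · Γ(m+ν+1))`. -/
noncomputable def besselI (ν x : ℝ) : ℝ :=
  ∑' m : ℕ, (x / 2) ^ ((2 * m : ℝ) + ν) / (Nat.factorial m * Real.Gamma (m + ν + 1))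

open Real Finset Nat

theorem hasDerivAt_sum_range_neg_pow_div_factorial (n : ℕ) (t : ℝ) :
    HasDerivAt (fun s : ℝ => ∑ k ∈ range (n + 1), (-s) ^ k / k !)
      (-∑ k ∈ range n, (-t) ^ k / k !) t := by
  have hterm : ∀ k ∈ range (n + 1), HasDerivAt (fun s : ℝ => (-s) ^ k / k !)
      ((k * (-t) ^ (k - 1) * -1) / k !) t := fun k _ =>
    (((hasDerivAt_id t).neg).pow k).div_const _ |>.congr_deriv (by simp)
  refine (HasDerivAt.fun_sum hterm).congr_deriv ?_
  rw [sum_range_succ', ← sum_neg_distrib]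
  simp only [CharP.cast_eq_zero, zero_mul, zero_div, add_zero]
  refine sum_congr rfl fun k _ => ?_
  rw [Nat.add_sub_cancel, factorial_succ]
  push_cast
  field_simp

theorem neg_one_pow_mul_exp_neg_sub_sum_nonneg (n : ℕ) {t : ℝ} (ht : 0 ≤ t) :
    0 ≤ (-1) ^ n * (exp (-t) - ∑ k ∈ range n, (-t) ^ k / k !) := by
  induction n generalizing t with
  | zero => simpa using (exp_pos (-t)).le
  | succ n ih =>
    set g : ℝ → ℝ := fun s => (-1) ^ (n + 1) * (exp (-s) - ∑ k ∈ range (n + 1), (-s) ^ k / k !)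
    have hg : ∀ s, HasDerivAt g ((-1) ^ n * (exp (-s) - ∑ k ∈ range n, (-s) ^ k / k !)) s := by
      intro s
      refine (((hasDerivAt_neg s).exp.sub
        (hasDerivAt_sum_range_neg_pow_div_factorial n s)).const_mul _).congr_deriv ?_
      rw [pow_succ]; ring
    have hmono : MonotoneOn g (Set.Ici 0) :=
      monotoneOn_of_hasDerivWithinAt_nonneg (convex_Ici 0)
        (fun s _ => (hg s).continuousAt.continuousWithinAt)
        (fun s _ => (hg s).hasDerivWithinAt)
        (fun s hs => ih (interior_subset hs))
    have hg0 : g 0 = 0 := by simp [g, sum_range_succ']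
    simpa [hg0] using hmono Set.self_mem_Ici ht ht

theorem exp_neg_le_sum_range_neg_pow_div_factorial (n : ℕ) {t : ℝ} (ht : 0 ≤ t) :
    exp (-t) ≤ ∑ k ∈ range (2 * n + 1), (-t) ^ k / k ! := by
  have := neg_one_pow_mul_exp_neg_sub_sum_nonneg (2 * n + 1) ht
  rw [(odd_two_mul_add_one n).neg_one_pow] at this
  linarith

theorem sum_range_neg_pow_div_factorial_eq (n : ℕ) (t : ℝ) :
    ∑ k ∈ range (2 * n + 1), (-t) ^ k / k ! =
      ∑ m ∈ range (n + 1), t ^ (2 * m) / (2 * m)! -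
        ∑ m ∈ range n, t ^ (2 * m + 1) / (2 * m + 1)! := by
  induction n with
  | zero => simp
  | succ n ih =>
    have h_even : Even (2 * n + 2) := ⟨n + 1, by ring⟩
    rw [show 2 * (n + 1) + 1 = 2 * n + 1 + 1 + 1 by ring, sum_range_succ, sum_range_succ, ih,
      (odd_two_mul_add_one n).neg_pow, h_even.neg_pow,
      sum_range_succ (fun m => t ^ (2 * m) / (2 * m)!) (n + 1),
      sum_range_succ (fun m => t ^ (2 * m + 1) / (2 * m + 1)!) n, show 2 * (n + 1) = 2 * n + 2 by ring]
    ring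

theorem hasDerivAt_sum_range_pow_two_mul_div_factorial (n : ℕ) (t : ℝ) :
    HasDerivAt (fun s : ℝ => ∑ m ∈ range (n + 1), s ^ (2 * m) / (2 * m)!)
      (∑ m ∈ range n, t ^ (2 * m + 1) / (2 * m + 1)!) t := by
  have hterm : ∀ m ∈ range (n + 1), HasDerivAt (fun s : ℝ => s ^ (2 * m) / (2 * m)!)
      ((2 * m : ℕ) * t ^ (2 * m - 1) / (2 * m)!) t := fun m _ =>
    (hasDerivAt_pow (2 * m) t).div_const _
  refine (HasDerivAt.fun_sum hterm).congr_deriv ?_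
  rw [sum_range_succ']
  simp only [mul_zero, CharP.cast_eq_zero, zero_mul, zero_div, add_zero]
  refine sum_congr rfl fun m _ => ?_
  rw [show 2 * (m + 1) = 2 * m + 1 + 1 by ring, Nat.add_sub_cancel, factorial_succ]
  push_cast
  field_simp

theorem exp_mul_sum_range_pow_two_mul_div_factorial_le (n : ℕ) {x y : ℝ} (hx : 0 ≤ x)
    (hxy : x ≤ y) :
    exp x * ∑ m ∈ range n, y ^ (2 * m) / (2 * m)! ≤
      exp y * ∑ m ∈ range n, x ^ (2 * m) / (2 * m)! := by
  obtain _ | n := n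
  · simp
  set C : ℝ → ℝ := fun s => ∑ m ∈ range (n + 1), s ^ (2 * m) / (2 * m)!
  have hf : ∀ s, HasDerivAt (fun s => exp (-s) * C s)
      (-(exp (-s) * ∑ k ∈ range (2 * n + 1), (-s) ^ k / k !)) s := fun s =>
    ((hasDerivAt_neg s).exp.mul (hasDerivAt_sum_range_pow_two_mul_div_factorial n s)).congr_deriv
      (by rw [sum_range_neg_pow_div_factorial_eq]; ring)
  have hanti : AntitoneOn (fun s => exp (-s) * C s) (Set.Ici 0) :=
    antitoneOn_of_hasDerivWithinAt_nonpos (convex_Ici 0)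
      (fun s _ => (hf s).continuousAt.continuousWithinAt)
      (fun s _ => (hf s).hasDerivWithinAt)
      (fun s hs => neg_nonpos.2 <| mul_nonneg (exp_pos _).le <|
        (exp_pos _).le.trans (exp_neg_le_sum_range_neg_pow_div_factorial n (interior_subset hs)))
  have key : exp (-y) * C y ≤ exp (-x) * C x := hanti hx (hx.trans hxy) hxy
  show exp x * C y ≤ exp y * C x
  calc exp x * C y = exp x * exp y * (exp (-y) * C y) := by rw [exp_neg]; field_simp
    _ ≤ exp x * exp y * (exp (-x) * C x) := by gcongr
    _ = exp y * C x := by rw [exp_neg]; field_simp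

theorem sum_range_mul_nonneg_of_antitone {ψ u : ℕ → ℝ} (hψ : Antitone ψ) (hψ0 : ∀ m, 0 ≤ ψ m)
    (hu : ∀ n, 0 ≤ ∑ m ∈ range n, u m) (n : ℕ) : 0 ≤ ∑ m ∈ range n, ψ m * u m := by
  have h := sum_range_by_parts ψ u n
  simp only [smul_eq_mul] at h
  rw [h, sub_nonneg]
  refine (sum_nonpos fun i _ => ?_).trans (mul_nonneg (hψ0 _) (hu n))
  exact mul_nonpos_of_nonpos_of_nonneg (sub_nonpos.2 (hψ i.le_succ)) (hu _)

theorem tsum_mul_nonneg_of_antitone {ψ u : ℕ → ℝ} (hψ : Antitone ψ) (hψ0 : ∀ m, 0 ≤ ψ m)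
    (hu : ∀ n, 0 ≤ ∑ m ∈ range n, u m) (hs : Summable fun m => ψ m * u m) :
    0 ≤ ∑' m, ψ m * u m :=
  ge_of_tendsto hs.hasSum.tendsto_sum_nat
    (Filter.Eventually.of_forall (sum_range_mul_nonneg_of_antitone hψ hψ0 hu))

theorem pow_two_mul_div_factorial_nonneg (t : ℝ) (m : ℕ) : 0 ≤ t ^ (2 * m) / (2 * m)! :=
  div_nonneg ((even_two_mul m).pow_nonneg t) (by positivity)

section AntitoneCoefficients

variable {ψ : ℕ → ℝ}

theorem summable_mul_pow_two_mul_div_factorial (hψ : Antitone ψ) (hψ0 : ∀ m, 0 ≤ ψ m)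
    (t : ℝ) :
    Summable fun m => ψ m * (t ^ (2 * m) / (2 * m)!) :=
  Summable.of_nonneg_of_le (fun m => mul_nonneg (hψ0 m) (pow_two_mul_div_factorial_nonneg t m))
    (fun m => mul_le_mul_of_nonneg_right (hψ m.zero_le) (pow_two_mul_div_factorial_nonneg t m))
    (((summable_pow_div_factorial t).comp_injective fun _ _ h => by omega).mul_left (ψ 0))

theorem tsum_mul_pow_two_mul_div_factorial_pos (hψ : Antitone ψ) (hψ0 : ∀ m, 0 ≤ ψ m)
    (h0 : 0 < ψ 0) (t : ℝ) :
    0 < ∑' m, ψ m * (t ^ (2 * m) / (2 * m)!) :=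
  (summable_mul_pow_two_mul_div_factorial hψ hψ0 t).tsum_pos
    (fun m => mul_nonneg (hψ0 m) (pow_two_mul_div_factorial_nonneg t m)) 0 (by simpa using h0)

theorem tsum_mul_pow_two_mul_div_factorial_mono (hψ : Antitone ψ) (hψ0 : ∀ m, 0 ≤ ψ m)
    {x y : ℝ} (hx : 0 ≤ x) (hxy : x ≤ y) :
    ∑' m, ψ m * (x ^ (2 * m) / (2 * m)!) ≤ ∑' m, ψ m * (y ^ (2 * m) / (2 * m)!) :=
  Summable.tsum_le_tsum
    (fun m => mul_le_mul_of_nonneg_left (div_le_div_of_nonneg_right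
      (pow_le_pow_left₀ hx hxy _) (by positivity)) (hψ0 m))
    (summable_mul_pow_two_mul_div_factorial hψ hψ0 x)
    (summable_mul_pow_two_mul_div_factorial hψ hψ0 y)

theorem exp_mul_tsum_mul_pow_two_mul_div_factorial_le (hψ : Antitone ψ) (hψ0 : ∀ m, 0 ≤ ψ m)
    {x y : ℝ} (hx : 0 ≤ x) (hxy : x ≤ y) :
    exp x * ∑' m, ψ m * (y ^ (2 * m) / (2 * m)!) ≤
      exp y * ∑' m, ψ m * (x ^ (2 * m) / (2 * m)!) := by
  set u : ℕ → ℝ := fun m => exp y * (x ^ (2 * m) / (2 * m)!) - exp x * (y ^ (2 * m) / (2 * m)!)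
  have hu (n : ℕ) : 0 ≤ ∑ m ∈ range n, u m := by
    simp only [u, sum_sub_distrib, ← mul_sum, sub_nonneg]
    exact exp_mul_sum_range_pow_two_mul_div_factorial_le n hx hxy
  have hSx := (summable_mul_pow_two_mul_div_factorial hψ hψ0 x).mul_left (exp y)
  have hSy := (summable_mul_pow_two_mul_div_factorial hψ hψ0 y).mul_left (exp x)
  have hsplit : (fun m => ψ m * u m) = fun m =>
      exp y * (ψ m * (x ^ (2 * m) / (2 * m)!)) - exp x * (ψ m * (y ^ (2 * m) / (2 * m)!)) := by
    funext m; ring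
  have := tsum_mul_nonneg_of_antitone hψ hψ0 hu (hsplit ▸ hSx.sub hSy)
  rw [hsplit, hSx.tsum_sub hSy, tsum_mul_left, tsum_mul_left, sub_nonneg] at this
  exact this

end AntitoneCoefficients

noncomputable def besselCoeff (ν : ℝ) (m : ℕ) : ℝ :=
  (2 * m)! / (4 ^ m * m ! * Gamma (m + ν + 1))

theorem besselCoeff_pos {ν : ℝ} (hν : -1 < ν) (m : ℕ) : 0 < besselCoeff ν m := by
  have := Gamma_pos_of_pos (show 0 < (m : ℝ) + ν + 1 by linarith [m.cast_nonneg (α := ℝ)])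
  unfold besselCoeff
  positivity

theorem besselCoeff_antitone {ν : ℝ} (hν : -1 / 2 ≤ ν) : Antitone (besselCoeff ν) := by
  refine antitone_nat_of_succ_le fun m => ?_
  have hΓ : Gamma (((m + 1 : ℕ) : ℝ) + ν + 1) = (m + ν + 1) * Gamma (m + ν + 1) := by
    rw [← Gamma_add_one (by linarith)]; push_cast; ring_nf
  have hstep : besselCoeff ν (m + 1) = besselCoeff ν m * ((2 * m + 1) / (2 * (m + ν + 1))) := by
    have := Gamma_pos_of_pos (show 0 < (m : ℝ) + ν + 1 by linarith)
    rw [besselCoeff, besselCoeff, hΓ, show 2 * (m + 1) = 2 * m + 1 + 1 by ring, factorial_succ,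
      factorial_succ, factorial_succ]
    push_cast
    field_simp
    ring
  rw [hstep]
  exact mul_le_of_le_one_right (besselCoeff_pos (by linarith) m).le
    ((div_le_one (by linarith)).2 (by linarith))

theorem besselI_eq_rpow_mul_tsum {ν x : ℝ} (hx : 0 < x) :
    besselI ν x = (x / 2) ^ ν * ∑' m, besselCoeff ν m * (x ^ (2 * m) / (2 * m)!) := by
  rw [besselI, ← tsum_mul_left]
  congr 1 with m
  rw [rpow_add (by positivity), show (2 * m : ℝ) = ((2 * m : ℕ) : ℝ) by push_cast; ring,
    rpow_natCast, besselCoeff, div_pow, show (2 : ℝ) ^ (2 * m) = 4 ^ m by rw [pow_mul]; norm_num]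
  field_simp

/-- For `0 < x < y` and `ν > 0`,
`e^{x−y}·(x/y)^ν ≤ I_ν(x)/I_ν(y) ≤ e^{y−x}·(x/y)^ν`. -/
theorem besselI_ratio_bounds (ν x y : ℝ) (hν : 0 < ν) (hx : 0 < x) (hxy : x < y) :
    Real.exp (x - y) * (x / y) ^ ν ≤ besselI ν x / besselI ν y ∧
      besselI ν x / besselI ν y ≤ Real.exp (y - x) * (x / y) ^ ν := by
  have hy : 0 < y := hx.trans hxy
  have hψ : Antitone (besselCoeff ν) := besselCoeff_antitone (by linarith)
  have hψ0 (m : ℕ) : 0 ≤ besselCoeff ν m := (besselCoeff_pos (by linarith) m).le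
  set S : ℝ → ℝ := fun t => ∑' m, besselCoeff ν m * (t ^ (2 * m) / (2 * m)!)
  have hS (t : ℝ) : 0 < S t :=
    tsum_mul_pow_two_mul_div_factorial_pos hψ hψ0 (besselCoeff_pos (by linarith) 0) t
  have hratio : besselI ν x / besselI ν y = S x / S y * (x / y) ^ ν := by
    rw [besselI_eq_rpow_mul_tsum hx, besselI_eq_rpow_mul_tsum hy, mul_div_mul_comm,
      ← div_rpow (by positivity) (by positivity), div_div_div_cancel_right₀ two_ne_zero, mul_comm]
  have hlower : exp (x - y) ≤ S x / S y := by
    rw [exp_sub, div_le_div_iff₀ (exp_pos y) (hS y), mul_comm (S x)]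
    exact exp_mul_tsum_mul_pow_two_mul_div_factorial_le hψ hψ0 hx.le hxy.le
  have hupper : S x / S y ≤ exp (y - x) :=
    ((div_le_one (hS y)).2 (tsum_mul_pow_two_mul_div_factorial_mono hψ hψ0 hx.le hxy.le)).trans
      (one_le_exp (by linarith))
  rw [hratio]
  exact ⟨by gcongr, by gcongr⟩
end

section
/- Consequence of the Bessel ratio bounds: for all κ₁, κ₂ in an interval (0, ∞) and ν = n/2 − 1 > 0, |log( κ₁^{n/2−1} I_{n/2−1}(κ₂) / (κ₂^{n/2−1} I_{n/2−1}(κ₁)) )| ≤ |κ₁ − κ₂|. -/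
open Real Set

noncomputable def besselICoeff (ν : ℝ) (m : ℕ) : ℝ :=
  1 / (4 ^ m * m.factorial * Gamma (m + ν + 1))

noncomputable def besselIReduced (ν x : ℝ) : ℝ :=
  ∑' m : ℕ, besselICoeff ν m * x ^ (2 * m)

noncomputable def besselIReducedDeriv (ν x : ℝ) : ℝ :=
  ∑' m : ℕ, besselICoeff ν m * ((2 * m : ℕ) * x ^ (2 * m - 1))

theorem besselI_eq_rpow_mul_besselIReduced (ν : ℝ) {x : ℝ} (hx : 0 < x) :
    besselI ν x = (x / 2) ^ ν * besselIReduced ν x := by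
  rw [besselI, besselIReduced, ← tsum_mul_left]
  congr 1 with m
  have hpow : (x / 2) ^ ((2 * m : ℝ) + ν) = (x / 2) ^ ν * x ^ (2 * m) / 4 ^ m := by
    rw [rpow_add (by positivity), show (2 * m : ℝ) = ((2 * m : ℕ) : ℝ) by push_cast; ring,
      rpow_natCast, div_pow, pow_mul 2]
    ring
  rw [hpow, besselICoeff]
  ring

section

variable {ν : ℝ}

theorem besselICoeff_pos (hν : -1 < ν) (m : ℕ) : 0 < besselICoeff ν m := by
  have : 0 < Gamma (m + ν + 1) := Gamma_pos_of_pos (by linarith [m.cast_nonneg (α := ℝ)])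
  rw [besselICoeff]
  positivity

theorem besselICoeff_eq_mul_succ (hν : -1 < ν) (m : ℕ) :
    besselICoeff ν m = 4 * (m + 1) * (m + ν + 1) * besselICoeff ν (m + 1) := by
  have hm : 0 < (m : ℝ) + ν + 1 := by linarith [m.cast_nonneg (α := ℝ)]
  have hΓ : Gamma (m + ν + 1) ≠ 0 := (Gamma_pos_of_pos hm).ne'
  have hΓsucc : Gamma ((m + 1 : ℕ) + ν + 1) = (m + ν + 1) * Gamma (m + ν + 1) := by
    rw [← Gamma_add_one hm.ne']
    push_cast
    ring_nf
  rw [besselICoeff, besselICoeff, hΓsucc, pow_succ, Nat.factorial_succ]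
  push_cast
  field_simp

theorem besselICoeff_le (hν : 0 ≤ ν) (m : ℕ) :
    besselICoeff ν m ≤ besselICoeff ν 0 / (4 ^ m * m.factorial) := by
  rw [le_div_iff₀ (by positivity)]
  induction m with
  | zero => simp
  | succ m ih =>
    have hrec := besselICoeff_eq_mul_succ (ν := ν) (by linarith) m
    have hc := (besselICoeff_pos (ν := ν) (by linarith) (m + 1)).le
    calc besselICoeff ν (m + 1) * (4 ^ (m + 1) * (m + 1).factorial)
        = 4 * (m + 1) * besselICoeff ν (m + 1) * (4 ^ m * m.factorial) := by
          push_cast [pow_succ, Nat.factorial_succ]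
          ring
      _ ≤ besselICoeff ν m * (4 ^ m * m.factorial) := by
          gcongr
          rw [hrec]
          have : (0 : ℝ) ≤ 4 * (m + 1) * (m + ν) := by positivity
          nlinarith
      _ ≤ besselICoeff ν 0 := ih

theorem besselICoeff_mul_le (hν : 0 ≤ ν) {m : ℕ} {B w : ℝ} (hw : w ≤ 4 ^ m * (B ^ 2) ^ m) :
    besselICoeff ν m * w ≤ besselICoeff ν 0 * ((B ^ 2) ^ m / m.factorial) := by
  have hc := (besselICoeff_pos (ν := ν) (by linarith) m).le
  calc besselICoeff ν m * w ≤ besselICoeff ν m * (4 ^ m * (B ^ 2) ^ m) := by gcongr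
    _ ≤ besselICoeff ν 0 / (4 ^ m * m.factorial) * (4 ^ m * (B ^ 2) ^ m) := by
        gcongr
        exact besselICoeff_le hν m
    _ = besselICoeff ν 0 * ((B ^ 2) ^ m / m.factorial) := by field_simp

theorem norm_besselICoeff_mul_pow_le (hν : 0 ≤ ν) {B y : ℝ} (hy : |y| ≤ B) (m : ℕ) :
    ‖besselICoeff ν m * y ^ (2 * m)‖ ≤ besselICoeff ν 0 * ((B ^ 2) ^ m / m.factorial) := by
  rw [norm_mul, norm_pow, norm_of_nonneg (besselICoeff_pos (by linarith) m).le, norm_eq_abs,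
    pow_mul, sq_abs]
  have hy2 : y ^ 2 ≤ B ^ 2 := by nlinarith [abs_nonneg y, sq_abs y]
  exact besselICoeff_mul_le hν ((pow_le_pow_left₀ (sq_nonneg y) hy2 m).trans
    (le_mul_of_one_le_left (by positivity) (one_le_pow₀ (by norm_num))))

theorem norm_besselICoeff_mul_deriv_pow_le (hν : 0 ≤ ν) {B y : ℝ} (hB : 1 ≤ B) (hy : |y| ≤ B)
    (m : ℕ) :
    ‖besselICoeff ν m * ((2 * m : ℕ) * y ^ (2 * m - 1))‖ ≤
      besselICoeff ν 0 * ((B ^ 2) ^ m / m.factorial) := by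
  rw [norm_mul, norm_mul, norm_pow, norm_of_nonneg (besselICoeff_pos (by linarith) m).le,
    norm_of_nonneg (Nat.cast_nonneg _)]
  refine besselICoeff_mul_le hν (mul_le_mul ?_ ?_ (by positivity) (by positivity))
  · exact_mod_cast (Nat.lt_two_pow_self (n := 2 * m)).le.trans (by rw [pow_mul]; norm_num)
  · calc ‖y‖ ^ (2 * m - 1) ≤ B ^ (2 * m - 1) := by gcongr; exact hy
      _ ≤ B ^ (2 * m) := pow_le_pow_right₀ hB (Nat.sub_le _ _)
      _ = (B ^ 2) ^ m := pow_mul B 2 m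

theorem summable_besselICoeff_mul_pow (hν : 0 ≤ ν) (x : ℝ) :
    Summable fun m ↦ besselICoeff ν m * x ^ (2 * m) :=
  ((summable_pow_div_factorial _).mul_left _).of_norm_bounded
    (norm_besselICoeff_mul_pow_le hν le_rfl)

theorem summable_besselICoeff_mul_deriv_pow (hν : 0 ≤ ν) (x : ℝ) :
    Summable fun m ↦ besselICoeff ν m * ((2 * m : ℕ) * x ^ (2 * m - 1)) :=
  ((summable_pow_div_factorial _).mul_left _).of_norm_bounded
    (norm_besselICoeff_mul_deriv_pow_le hν (le_max_left 1 |x|) (le_max_right 1 |x|))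

theorem besselIReduced_pos (hν : 0 ≤ ν) (x : ℝ) : 0 < besselIReduced ν x := by
  have hnonneg (m : ℕ) : 0 ≤ besselICoeff ν m * x ^ (2 * m) :=
    mul_nonneg (besselICoeff_pos (by linarith) m).le (by rw [pow_mul]; positivity)
  calc 0 < besselICoeff ν 0 * x ^ (2 * 0) := by simpa using besselICoeff_pos (by linarith) 0
    _ ≤ besselIReduced ν x :=
        (summable_besselICoeff_mul_pow hν x).le_tsum 0 fun m _ ↦ hnonneg m

theorem besselIReducedDeriv_nonneg (hν : -1 < ν) {x : ℝ} (hx : 0 ≤ x) :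
    0 ≤ besselIReducedDeriv ν x :=
  tsum_nonneg fun m ↦ mul_nonneg (besselICoeff_pos hν m).le (by positivity)

theorem hasDerivAt_besselIReduced (hν : 0 ≤ ν) (x : ℝ) :
    HasDerivAt (besselIReduced ν) (besselIReducedDeriv ν x) x := by
  set B := |x| + 1
  have hB : 1 ≤ B := by simp [B]
  refine hasDerivAt_tsum_of_isPreconnected ((summable_pow_div_factorial (B ^ 2)).mul_left _)
    isOpen_Ioo isPreconnected_Ioo (fun m y _ ↦ (hasDerivAt_pow (2 * m) y).const_mul _)
    (fun m y hy ↦ norm_besselICoeff_mul_deriv_pow_le hν hB (abs_le.2 ⟨hy.1.le, hy.2.le⟩) m)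
    (y₀ := 0) ⟨by linarith, by linarith⟩ (summable_besselICoeff_mul_pow hν 0)
    (abs_lt.1 (by linarith))

theorem besselICoeff_succ_mul_deriv_pow_le (hν : 0 ≤ ν) {x : ℝ} (hx : 0 ≤ x) (k : ℕ) :
    besselICoeff ν (k + 1) * ((2 * (k + 1) : ℕ) * x ^ (2 * (k + 1) - 1)) ≤
      (besselICoeff ν k * x ^ (2 * k) + besselICoeff ν (k + 1) * x ^ (2 * (k + 1))) / 2 := by
  have hc := (besselICoeff_pos (ν := ν) (by linarith) (k + 1)).le
  rw [besselICoeff_eq_mul_succ (by linarith) k, show 2 * (k + 1) - 1 = 2 * k + 1 by omega,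
    pow_succ, mul_add_one 2 k, pow_succ, pow_succ]
  push_cast
  -- twice the right side minus the left side
  have hgap :
      0 ≤ besselICoeff ν (k + 1) * x ^ (2 * k) * ((2 * (k + 1) - x) ^ 2 + 4 * (k + 1) * ν) := by
    positivity
  nlinarith

theorem besselIReducedDeriv_le (hν : 0 ≤ ν) {x : ℝ} (hx : 0 ≤ x) :
    besselIReducedDeriv ν x ≤ besselIReduced ν x := by
  set a : ℕ → ℝ := fun m ↦ besselICoeff ν m * x ^ (2 * m)
  set b : ℕ → ℝ := fun m ↦ besselICoeff ν m * ((2 * m : ℕ) * x ^ (2 * m - 1))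
  have ha : Summable a := summable_besselICoeff_mul_pow hν x
  have ha' : Summable fun k ↦ a (k + 1) := (summable_nat_add_iff 1).2 ha
  have hb' : Summable fun k ↦ b (k + 1) :=
    (summable_nat_add_iff 1).2 (summable_besselICoeff_mul_deriv_pow hν x)
  have ha0 : 0 ≤ a 0 := by simpa [a] using (besselICoeff_pos (ν := ν) (by linarith) 0).le
  calc besselIReducedDeriv ν x = ∑' k, b (k + 1) := by
        rw [besselIReducedDeriv, (summable_besselICoeff_mul_deriv_pow hν x).tsum_eq_zero_add]
        simp only [mul_zero, Nat.cast_zero, zero_mul, zero_add]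
        rfl
    _ ≤ ∑' k, (a k + a (k + 1)) / 2 :=
        hb'.tsum_le_tsum (besselICoeff_succ_mul_deriv_pow_le hν hx) ((ha.add ha').div_const 2)
    _ = (∑' k, a k + ∑' k, a (k + 1)) / 2 := by rw [tsum_div_const, ha.tsum_add ha']
    _ ≤ besselIReduced ν x := by
        have := ha.tsum_eq_zero_add
        simp only [besselIReduced] at this ⊢
        linarith

theorem lipschitzOnWith_log_besselIReduced (hν : 0 ≤ ν) :
    LipschitzOnWith 1 (fun x ↦ log (besselIReduced ν x)) (Ici 0) := by
  refine (convex_Ici 0).lipschitzOnWith_of_nnnorm_hasDerivWithin_le (fun x _ ↦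
    ((hasDerivAt_besselIReduced hν x).log (besselIReduced_pos hν x).ne').hasDerivWithinAt)
    fun x hx ↦ ?_
  have hg := besselIReduced_pos hν x
  rw [← NNReal.coe_le_coe, coe_nnnorm, norm_div, norm_of_nonneg hg.le,
    norm_of_nonneg (besselIReducedDeriv_nonneg (by linarith) hx), NNReal.coe_one, div_le_one hg]
  exact besselIReducedDeriv_le hν hx

end

/-- For `κ₁, κ₂ > 0` and `ν = n/2 − 1 > 0`,
`|log( κ₁^{n/2−1} I_{n/2−1}(κ₂) / (κ₂^{n/2−1} I_{n/2−1}(κ₁)) )| ≤ |κ₁ − κ₂|`. -/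
theorem abs_log_bessel_normalizing_ratio_le (n : ℕ) (κ₁ κ₂ : ℝ)
    (hκ₁ : 0 < κ₁) (hκ₂ : 0 < κ₂) (hν : 0 < (n : ℝ) / 2 - 1) :
    |Real.log (κ₁ ^ ((n : ℝ) / 2 - 1) * besselI ((n : ℝ) / 2 - 1) κ₂ /
        (κ₂ ^ ((n : ℝ) / 2 - 1) * besselI ((n : ℝ) / 2 - 1) κ₁))| ≤ |κ₁ - κ₂| := by
  set ν : ℝ := (n : ℝ) / 2 - 1
  have hg₁ := besselIReduced_pos hν.le κ₁
  have hg₂ := besselIReduced_pos hν.le κ₂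
  have hratio : κ₁ ^ ν * besselI ν κ₂ / (κ₂ ^ ν * besselI ν κ₁) =
      besselIReduced ν κ₂ / besselIReduced ν κ₁ := by
    have : (0 : ℝ) < 2 ^ ν := by positivity
    have : 0 < κ₁ ^ ν := by positivity
    have : 0 < κ₂ ^ ν := by positivity
    rw [besselI_eq_rpow_mul_besselIReduced ν hκ₁, besselI_eq_rpow_mul_besselIReduced ν hκ₂,
      div_rpow hκ₁.le zero_le_two, div_rpow hκ₂.le zero_le_two]
    field_simp
  rw [hratio, log_div hg₂.ne' hg₁.ne', abs_sub_comm κ₁ κ₂]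
  simpa [dist_eq] using (lipschitzOnWith_log_besselIReduced hν.le).dist_le_mul
    κ₂ (mem_Ici.2 hκ₂.le) κ₁ (mem_Ici.2 hκ₁.le)
end
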